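/- Let T and W be independent real-valued random variables on a probability space (Ω, 𝓕, P), the law of T having density f₁ with respect to Lebesgue measure and the law of W having density g with respect to Lebesgue measure, where g vanishes on (−∞, c] for a fixed real constant c. Define A := T if T > c, and A := W if T ≤ c, and set q := P(T ≤ c). Then, with the convention 0/0 = 0, a version of the conditional expectation E[1_{T > c} | σ(A)] is given P-almost everywhere by ω ↦ f₁(A(ω)) / ( f₁(A(ω)) + q·g(A(ω)) ). -/

import Mathlib

/-!
On `{T > c}` the observed time `A` is `T`, whose
law restricted to `(c, ∞)` has density `f₁ · 1_{(c,∞)}`; on `{T ≤ c}` it is `W`, which by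
independence has law `q · g`. So `A` has density `f₁ · 1_{(c,∞)} + q g`, and the conditional
probability of `{T > c}` given `A` is the share of the first summand. Since `g` vanishes on
`(-∞, c]`, `A > c` almost surely, where the indicator can be dropped.
-/

open MeasureTheory ProbabilityTheory

section DensityRatio

variable {Ω β : Type*} [MeasurableSpace Ω] [MeasurableSpace β]

theorem setIntegral_comp_eq_setIntegral_mul_of_map_eq_withDensity {μ : Measure Ω} {X : Ω → β}
    (hX : Measurable X) {ν : Measure β} {ρ : β → ℝ} (hρ : Measurable ρ) (hρ0 : ∀ b, 0 ≤ ρ b)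
    (hmap : μ.map X = ν.withDensity fun b => ENNReal.ofReal (ρ b))
    {h : β → ℝ} (hh : Measurable h) {B : Set β} (hB : MeasurableSet B) :
    ∫ ω in X ⁻¹' B, h (X ω) ∂μ = ∫ b in B, ρ b * h b ∂ν := by
  rw [← setIntegral_map hB hh.aestronglyMeasurable hX.aemeasurable, hmap,
    setIntegral_withDensity_eq_setIntegral_toReal_smul hρ.ennreal_ofReal
      (ae_of_all _ fun _ => ENNReal.ofReal_lt_top) _ hB]
  simp_rw [ENNReal.toReal_ofReal (hρ0 _), smul_eq_mul]

theorem condExp_indicator_comap_ae_eq_div {P : Measure Ω} [IsFiniteMeasure P] {X : Ω → β}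
    (hX : Measurable X) {E : Set Ω} (hE : MeasurableSet E) {ν : Measure β} {p r : β → ℝ}
    (hp : Measurable p) (hr : Measurable r) (hp0 : ∀ b, 0 ≤ p b) (hr0 : ∀ b, 0 ≤ r b)
    (hpE : (P.restrict E).map X = ν.withDensity fun b => ENNReal.ofReal (p b))
    (hrE : (P.restrict Eᶜ).map X = ν.withDensity fun b => ENNReal.ofReal (r b)) :
    P[E.indicator (fun _ => (1 : ℝ)) | MeasurableSpace.comap X inferInstance]
      =ᵐ[P] fun ω => p (X ω) / (p (X ω) + r (X ω)) := by
  set φ : β → ℝ := fun b => p b / (p b + r b)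
  have hφ : Measurable φ := hp.div (hp.add hr)
  have hφ_mul : ∀ b, (p b + r b) * φ b = p b := fun b =>
    (mul_comm _ _).trans <| div_mul_cancel_of_imp fun h => by linarith [hp0 b, hr0 b]
  have hφ_le : ∀ b, ‖φ b‖ ≤ 1 := fun b => by
    rw [Real.norm_of_nonneg (div_nonneg (hp0 b) (add_nonneg (hp0 b) (hr0 b)))]
    exact div_le_one_of_le₀ (le_add_of_nonneg_right (hr0 b)) (add_nonneg (hp0 b) (hr0 b))
  have hmap : P.map X = ν.withDensity fun b => ENNReal.ofReal (p b + r b) := by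
    rw [← Measure.restrict_add_restrict_compl (μ := P) hE, Measure.map_add _ _ hX, hpE, hrE,
      ← withDensity_add_left hp.ennreal_ofReal]
    congr 1
    funext b
    exact (ENNReal.ofReal_add (hp0 b) (hr0 b)).symm
  have hφX : Integrable (fun ω => φ (X ω)) P :=
    .of_bound (hφ.comp hX).aestronglyMeasurable 1 (ae_of_all _ fun ω => hφ_le (X ω))
  refine (ae_eq_condExp_of_forall_setIntegral_eq hX.comap_le
    ((integrable_const 1).indicator hE) (fun _ _ _ => hφX.integrableOn) ?_
    (hφ.comp (comap_measurable X)).aestronglyMeasurable).symm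
  rintro _ ⟨B, hB, rfl⟩ -
  calc ∫ ω in X ⁻¹' B, φ (X ω) ∂P
      = ∫ b in B, (p b + r b) * φ b ∂ν :=
        setIntegral_comp_eq_setIntegral_mul_of_map_eq_withDensity hX (hp.add hr)
          (fun b => add_nonneg (hp0 b) (hr0 b)) hmap hφ hB
    _ = ∫ b in B, p b * 1 ∂ν := by simp_rw [hφ_mul, mul_one]
    _ = ∫ ω in X ⁻¹' B, 1 ∂(P.restrict E) :=
        (setIntegral_comp_eq_setIntegral_mul_of_map_eq_withDensity hX hp hp0 hpE
          measurable_const hB).symm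
    _ = ∫ ω in X ⁻¹' B, E.indicator (fun _ => (1 : ℝ)) ω ∂P := by
        rw [setIntegral_indicator hE, Measure.restrict_restrict' hE]

end DensityRatio

section WithDensity

variable {α : Type*} [MeasurableSpace α] {μ : Measure α}

theorem restrict_withDensity_ofReal {s : Set α} (hs : MeasurableSet s) (f : α → ℝ) :
    (μ.withDensity fun a => ENNReal.ofReal (f a)).restrict s
      = μ.withDensity fun a => ENNReal.ofReal (s.indicator f a) := by
  rw [restrict_withDensity hs, ← withDensity_indicator hs]
  exact congrArg _ (Set.indicator_comp_of_zero ENNReal.ofReal_zero)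

theorem smul_withDensity_ofReal {t : ENNReal} (ht : t ≠ ⊤) (f : α → ℝ) :
    t • μ.withDensity (fun a => ENNReal.ofReal (f a))
      = μ.withDensity fun a => ENNReal.ofReal (t.toReal * f a) := by
  rw [← withDensity_smul' _ _ ht]
  congr 1
  funext a
  rw [Pi.smul_apply, smul_eq_mul, ENNReal.ofReal_mul ENNReal.toReal_nonneg,
    ENNReal.ofReal_toReal ht]

theorem withDensity_ofReal_eq_zero {f : α → ℝ} {s : Set α} (hs : MeasurableSet s)
    (hf : ∀ a ∈ s, f a = 0) : (μ.withDensity fun a => ENNReal.ofReal (f a)) s = 0 := by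
  rw [withDensity_apply _ hs]
  exact (setLIntegral_congr_fun hs fun a ha => by rw [hf a ha, ENNReal.ofReal_zero]).trans
    lintegral_zero

end WithDensity

theorem ProbabilityTheory.IndepFun.map_restrict_preimage_eq_smul {Ω β γ : Type*}
    [MeasurableSpace Ω] [MeasurableSpace β] [MeasurableSpace γ] {P : Measure Ω}
    {T : Ω → γ} {W : Ω → β} (hind : IndepFun T W P) (hW : Measurable W)
    {S : Set γ} (hS : MeasurableSet S) :
    (P.restrict (T ⁻¹' S)).map W = P (T ⁻¹' S) • P.map W := by
  ext B hB
  rw [Measure.map_apply hW hB, Measure.restrict_apply (hW hB), Measure.smul_apply,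
    Measure.map_apply hW hB, smul_eq_mul, Set.inter_comm,
    hind.measure_inter_preimage_eq_mul _ _ hS hB]

section FirstEvent

variable {Ω : Type*} [MeasurableSpace Ω] {P : Measure Ω} {T W : Ω → ℝ} {c : ℝ}

theorem map_restrict_lt_ite (hT : Measurable T) :
    (P.restrict {ω | c < T ω}).map (fun ω => if c < T ω then T ω else W ω)
      = (P.map T).restrict (Set.Ioi c) := by
  have hTc : MeasurableSet {ω | c < T ω} := hT measurableSet_Ioi
  rw [Measure.map_congr (f := fun ω => if c < T ω then T ω else W ω) (g := T)
      (ae_restrict_of_forall_mem hTc fun ω hω => if_pos hω),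
    Measure.restrict_map hT measurableSet_Ioi]
  rfl

theorem map_restrict_compl_lt_ite (hT : Measurable T) (hW : Measurable W)
    (hind : IndepFun T W P) :
    (P.restrict {ω | c < T ω}ᶜ).map (fun ω => if c < T ω then T ω else W ω)
      = P {ω | T ω ≤ c} • P.map W := by
  have hcompl : {ω | c < T ω}ᶜ = T ⁻¹' Set.Iic c := by ext; simp
  rw [hcompl, Measure.map_congr (g := W) (ae_restrict_of_forall_mem (hT measurableSet_Iic)
      fun ω (hω : T ω ≤ c) => if_neg (not_lt.2 hω)),
    hind.map_restrict_preimage_eq_smul hW measurableSet_Iic]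
  rfl

theorem ae_lt_ite_of_measure_preimage_Iic_eq_zero (hW : P (W ⁻¹' Set.Iic c) = 0) :
    ∀ᵐ ω ∂P, c < if c < T ω then T ω else W ω := by
  refine measure_mono_null (fun ω hω => ?_) hW
  by_cases h : c < T ω <;> simp_all

end FirstEvent

/-- Bayes-type formula for the zero-truncation scheme: with `A := T` if `T > c`
and `A := W` otherwise, and `q := P(T ≤ c)`, a version of `E[1_{T>c} | σ(A)]` is
`ω ↦ f₁(A(ω)) / (f₁(A(ω)) + q·g(A(ω)))` (with the convention `0/0 = 0`, which is
how division on `ℝ` behaves in Lean). -/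
theorem condexp_first_event_untruncated {Ω : Type*} [MeasurableSpace Ω]
    (P : Measure Ω) [IsProbabilityMeasure P]
    (T W : Ω → ℝ) (hT : Measurable T) (hW : Measurable W)
    (hindep : IndepFun T W P)
    (f₁ g : ℝ → ℝ) (hf₁ : Measurable f₁) (hg : Measurable g)
    (hf₁nn : ∀ a, 0 ≤ f₁ a) (hgnn : ∀ a, 0 ≤ g a)
    (hmapT : Measure.map T P = volume.withDensity (fun a => ENNReal.ofReal (f₁ a)))
    (hmapW : Measure.map W P = volume.withDensity (fun a => ENNReal.ofReal (g a)))
    (c : ℝ) (hgc : ∀ a ≤ c, g a = 0) :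
    P[Set.indicator {ω | c < T ω} (fun _ => (1 : ℝ))
        | MeasurableSpace.comap (fun ω => if c < T ω then T ω else W ω)
            (inferInstance : MeasurableSpace ℝ)]
      =ᵐ[P]
    fun ω =>
      f₁ (if c < T ω then T ω else W ω)
        / (f₁ (if c < T ω then T ω else W ω)
            + (P {ω' | T ω' ≤ c}).toReal * g (if c < T ω then T ω else W ω)) := by
  have hTc : MeasurableSet {ω | c < T ω} := hT measurableSet_Ioi
  have hWc : P (W ⁻¹' Set.Iic c) = 0 := by
    rw [← Measure.map_apply hW measurableSet_Iic, hmapW]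
    exact withDensity_ofReal_eq_zero measurableSet_Iic hgc
  have hq0 : ∀ a, 0 ≤ (P {ω' | T ω' ≤ c}).toReal * g a :=
    fun a => mul_nonneg ENNReal.toReal_nonneg (hgnn a)
  filter_upwards [condExp_indicator_comap_ae_eq_div (Measurable.ite hTc hT hW) hTc
      (r := fun a => _ * g a) (hf₁.indicator measurableSet_Ioi) (measurable_const.mul hg)
      (Set.indicator_nonneg fun a _ => hf₁nn a) hq0
      (by rw [map_restrict_lt_ite hT, hmapT, restrict_withDensity_ofReal measurableSet_Ioi])
      (by rw [map_restrict_compl_lt_ite hT hW hindep, hmapW,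
        smul_withDensity_ofReal (measure_ne_top _ _) g]),
    ae_lt_ite_of_measure_preimage_Iic_eq_zero (T := T) hWc] with ω hω hcA
  rw [hω, Set.indicator_of_mem (Set.mem_Ioi.2 hcA)]
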